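/- arXiv:2603.10812 — 7 statements merged into one kernel-verified Lean document; each statement's English description precedes it below -/
import Mathlib

section
/- Let A be an n×n real matrix and B an n×m real matrix, let I be a finite index set, and for each i ∈ I let x_i, r_i, y_i ∈ ℝ^n and u_i ∈ ℝ^m. If r_i = A x_i + B u_i for every i ∈ I, Σ_{i∈I} x_i y_iᵀ = I_n, and Σ_{i∈I} u_i y_iᵀ = 0 (the m×n zero matrix), then A = Σ_{i∈I} r_i y_iᵀ. -/
open Matrix BigOperators

/-- Modified data-based splitting scheme with inputs: if `r i = A *ᵥ x i + B *ᵥ u i`,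
the state outer products sum to the identity and the input outer products sum to zero,
then `A` is the sum of the rank-one shares `r i * (y i)ᵀ`, independently of `B`. -/
theorem data_splitting_with_input {n m : ℕ}
    (A : Matrix (Fin n) (Fin n) ℝ) (B : Matrix (Fin n) (Fin m) ℝ)
    (ι : Type*) [Fintype ι] (x r y : ι → Fin n → ℝ) (u : ι → Fin m → ℝ)
    (hr : ∀ i, r i = A *ᵥ x i + B *ᵥ u i)
    (hy : ∑ i, vecMulVec (x i) (y i) = (1 : Matrix (Fin n) (Fin n) ℝ))
    (hu : ∑ i, vecMulVec (u i) (y i) = (0 : Matrix (Fin m) (Fin n) ℝ)) :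
    A = ∑ i, vecMulVec (r i) (y i) := by
  have key : ∀ i, vecMulVec (r i) (y i)
      = A * vecMulVec (x i) (y i) + B * vecMulVec (u i) (y i) := by
    intro i
    ext a b
    simp [hr, vecMulVec_apply, Matrix.mul_apply, mulVec, dotProduct,
      Finset.sum_mul, mul_assoc, add_mul]
  calc A = A * (1 : Matrix (Fin n) (Fin n) ℝ) + B * (0 : Matrix (Fin m) (Fin n) ℝ) := by simp
    _ = A * (∑ i, vecMulVec (x i) (y i)) + B * (∑ i, vecMulVec (u i) (y i)) := by
        rw [hy, hu]
    _ = ∑ i, vecMulVec (r i) (y i) := by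
        simp only [Matrix.mul_sum]
        rw [← Finset.sum_add_distrib]
        exact (Finset.sum_congr rfl fun i _ => (key i).symm)
end

section
/- Let A, Q, P* be n×n real matrices with P* invertible and Aᵀ P* + P* A + Q = 0 (the Lyapunov equation). Let P : ℝ → Matrix (Fin n) (Fin n) ℝ be such that for every t ∈ ℝ, P has derivative Aᵀ P(t) + P(t) A + Q at t (HasDerivAt, with the matrix space as a normed space). Then the real-valued function V(t) := tr(P*⁻¹ (P(t) − P*) P*⁻¹ (P(t) − P*)) has derivative −2 tr(P*⁻¹ (P(t) − P*) P*⁻¹ Q P*⁻¹ (P(t) − P*)) at every t ∈ ℝ. -/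
open Matrix
open scoped Matrix.Norms.L2Operator

/-! Writing `X = P - P*`, the Lyapunov equation turns the flow into the homogeneous equation
`Ẋ = Aᵀ X + X A`, and by cyclicity of the trace `V̇ = 2 tr(P*⁻¹ Ẋ P*⁻¹ X)`. Substituting
`Q = -(Aᵀ P* + P* A)` into the claimed rate and cancelling `P*` against `P*⁻¹` gives the same two traces. -/

variable {m : Type*} [Fintype m] [DecidableEq m]

theorem HasDerivAt.matrix_trace {f : ℝ → Matrix m m ℝ} {f' : Matrix m m ℝ} {t : ℝ}
    (hf : HasDerivAt f f' t) : HasDerivAt (fun s => (f s).trace) f'.trace t :=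
  (traceLinearMap m ℝ ℝ).toContinuousLinearMap.hasFDerivAt.comp_hasDerivAt t hf

theorem HasDerivAt.trace_mul_mul_mul_self {f : ℝ → Matrix m m ℝ} {f' : Matrix m m ℝ} {t : ℝ}
    (hf : HasDerivAt f f' t) (E : Matrix m m ℝ) :
    HasDerivAt (fun s => (E * f s * E * f s).trace) (2 * (E * f' * E * f t).trace) t := by
  have hprod : HasDerivAt (fun s => E * f s * E * f s) (E * f' * E * f t + E * f t * E * f') t :=
    ((hf.const_mul E).mul_const E).mul hf
  convert hprod.matrix_trace using 1
  have hcycle : (E * f t * E * f').trace = (E * f' * E * f t).trace := by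
    simpa only [Matrix.mul_assoc] using trace_mul_comm (E * f t) (E * f')
  rw [trace_add, hcycle, two_mul]

theorem hasDerivAt_sub_of_lyapunov {A Q Pstar : Matrix m m ℝ}
    (hLyap : Aᵀ * Pstar + Pstar * A + Q = 0) {P : ℝ → Matrix m m ℝ} {t : ℝ}
    (hP : HasDerivAt P (Aᵀ * P t + P t * A + Q) t) :
    HasDerivAt (fun s => P s - Pstar) (Aᵀ * (P t - Pstar) + (P t - Pstar) * A) t := by
  have hrhs : Aᵀ * P t + P t * A + Q = Aᵀ * (P t - Pstar) + (P t - Pstar) * A := by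
    rw [← sub_eq_zero, ← hLyap]
    noncomm_ring
  simpa only [hrhs] using hP.sub_const Pstar

theorem trace_lyapunov_sandwich {A Q Pstar : Matrix m m ℝ} (hPinv : IsUnit Pstar)
    (hLyap : Aᵀ * Pstar + Pstar * A + Q = 0) (X : Matrix m m ℝ) :
    (Pstar⁻¹ * (Aᵀ * X + X * A) * Pstar⁻¹ * X).trace
      = -(Pstar⁻¹ * X * Pstar⁻¹ * Q * Pstar⁻¹ * X).trace := by
  have hdet := (isUnit_iff_isUnit_det Pstar).mp hPinv
  have hQ : Q = -(Aᵀ * Pstar + Pstar * A) := eq_neg_of_add_eq_zero_right hLyap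
  have hcycle : (Pstar⁻¹ * Aᵀ * X * Pstar⁻¹ * X).trace
      = (Pstar⁻¹ * X * Pstar⁻¹ * Aᵀ * X).trace := by
    simpa only [Matrix.mul_assoc] using trace_mul_comm (Pstar⁻¹ * Aᵀ * X) (Pstar⁻¹ * X)
  rw [hQ]
  simp only [Matrix.mul_neg, Matrix.neg_mul, Matrix.mul_add, Matrix.add_mul, Matrix.mul_assoc,
    trace_neg, trace_add, neg_neg, mul_nonsing_inv_cancel_left _ _ hdet,
    nonsing_inv_mul_cancel_left _ _ hdet] at hcycle ⊢
  rw [hcycle]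

/-- Lemma 2: along any solution of the differential Lyapunov equation
`Ṗ = Aᵀ P + P A + Q`, the Lyapunov function
`V(t) = tr(P*⁻¹ (P(t) − P*) P*⁻¹ (P(t) − P*))` has derivative
`−2 tr(P*⁻¹ (P(t) − P*) P*⁻¹ Q P*⁻¹ (P(t) − P*))`. -/
theorem lyapunov_dissipation_rate {n : ℕ}
    (A Q Pstar : Matrix (Fin n) (Fin n) ℝ)
    (hPinv : IsUnit Pstar)
    (hLyap : Aᵀ * Pstar + Pstar * A + Q = 0)
    (P : ℝ → Matrix (Fin n) (Fin n) ℝ)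
    (hP : ∀ t : ℝ, HasDerivAt P (Aᵀ * P t + P t * A + Q) t) :
    ∀ t : ℝ,
      HasDerivAt
        (fun s => (Pstar⁻¹ * (P s - Pstar) * Pstar⁻¹ * (P s - Pstar)).trace)
        (-2 * (Pstar⁻¹ * (P t - Pstar) * Pstar⁻¹ * Q * Pstar⁻¹ * (P t - Pstar)).trace)
        t := by
  intro t
  have hV := (hasDerivAt_sub_of_lyapunov hLyap (hP t)).trace_mul_mul_mul_self Pstar⁻¹
  rwa [trace_lyapunov_sandwich hPinv hLyap, mul_neg, ← neg_mul] at hV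
end

section
/- Let A, Q, P* be n×n real matrices with P* invertible and Aᵀ P* + P* A + Q = 0. Define the Kronecker products Ā := I_n ⊗ Aᵀ + Aᵀ ⊗ I_n, P̄ := P*⁻¹ ⊗ P*⁻¹, and Q̄ := P*⁻¹ ⊗ (P*⁻¹ Q P*⁻¹) + (P*⁻¹ Q P*⁻¹) ⊗ P*⁻¹. Then Āᵀ P̄ + P̄ Ā + Q̄ = 0. -/
open Matrix
open scoped Kronecker

private theorem neg_kronecker' {n : ℕ} (A B : Matrix (Fin n) (Fin n) ℝ) :
    (-A) ⊗ₖ B = -(A ⊗ₖ B) := by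
  ext ⟨i,j⟩ ⟨k,l⟩; simp [Matrix.kronecker_apply]

private theorem kronecker_neg' {n : ℕ} (A B : Matrix (Fin n) (Fin n) ℝ) :
    A ⊗ₖ (-B) = -(A ⊗ₖ B) := by
  ext ⟨i,j⟩ ⟨k,l⟩; simp [Matrix.kronecker_apply]

/-- Vectorized Lyapunov equation: with `Ā = I ⊗ Aᵀ + Aᵀ ⊗ I`, `P̄ = P*⁻¹ ⊗ P*⁻¹` and
`Q̄ = P*⁻¹ ⊗ (P*⁻¹ Q P*⁻¹) + (P*⁻¹ Q P*⁻¹) ⊗ P*⁻¹`, one has `Āᵀ P̄ + P̄ Ā + Q̄ = 0`. -/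
theorem vectorized_lyapunov_equation {n : ℕ}
    (A Q Pstar : Matrix (Fin n) (Fin n) ℝ)
    (hPinv : IsUnit Pstar)
    (hLyap : Aᵀ * Pstar + Pstar * A + Q = 0) :
    let Abar : Matrix (Fin n × Fin n) (Fin n × Fin n) ℝ :=
      (1 : Matrix (Fin n) (Fin n) ℝ) ⊗ₖ Aᵀ + Aᵀ ⊗ₖ (1 : Matrix (Fin n) (Fin n) ℝ)
    let Pbar : Matrix (Fin n × Fin n) (Fin n × Fin n) ℝ := Pstar⁻¹ ⊗ₖ Pstar⁻¹
    let Qbar : Matrix (Fin n × Fin n) (Fin n × Fin n) ℝ :=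
      Pstar⁻¹ ⊗ₖ (Pstar⁻¹ * Q * Pstar⁻¹) + (Pstar⁻¹ * Q * Pstar⁻¹) ⊗ₖ Pstar⁻¹
    Abarᵀ * Pbar + Pbar * Abar + Qbar = 0 := by
  intro Abar Pbar Qbar
  have hinv : Pstar⁻¹ * Pstar = 1 := nonsing_inv_mul _ ((Matrix.isUnit_iff_isUnit_det _).mp hPinv)
  have hinv' : Pstar * Pstar⁻¹ = 1 := mul_nonsing_inv _ ((Matrix.isUnit_iff_isUnit_det _).mp hPinv)
  have key : A * Pstar⁻¹ + Pstar⁻¹ * Aᵀ = -(Pstar⁻¹ * Q * Pstar⁻¹) := by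
    have h : Pstar⁻¹ * (Aᵀ * Pstar + Pstar * A + Q) * Pstar⁻¹ = 0 := by rw [hLyap]; simp
    calc A * Pstar⁻¹ + Pstar⁻¹ * Aᵀ
        = Pstar⁻¹ * (Aᵀ * Pstar + Pstar * A + Q) * Pstar⁻¹ - Pstar⁻¹ * Q * Pstar⁻¹ := by
          simp only [Matrix.mul_add, Matrix.add_mul]
          rw [Matrix.mul_assoc Pstar⁻¹ (Aᵀ * Pstar) Pstar⁻¹,
            Matrix.mul_assoc Aᵀ Pstar Pstar⁻¹, hinv',
            ← Matrix.mul_assoc Pstar⁻¹ Pstar A, hinv]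
          noncomm_ring
      _ = -(Pstar⁻¹ * Q * Pstar⁻¹) := by rw [h]; simp
  show Abarᵀ * Pbar + Pbar * Abar + Qbar = 0
  simp only [Abar, Pbar, Qbar, Matrix.transpose_add, ← Matrix.kroneckerMap_transpose,
    Matrix.transpose_one, Matrix.transpose_transpose, Matrix.add_mul, Matrix.mul_add,
    ← Matrix.mul_kronecker_mul, Matrix.one_mul, Matrix.mul_one]
  have e1 : (A * Pstar⁻¹) ⊗ₖ Pstar⁻¹ + Pstar⁻¹ ⊗ₖ (A * Pstar⁻¹)
      + (Pstar⁻¹ ⊗ₖ (Pstar⁻¹ * Aᵀ) + (Pstar⁻¹ * Aᵀ) ⊗ₖ Pstar⁻¹)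
      + (Pstar⁻¹ ⊗ₖ (Pstar⁻¹ * Q * Pstar⁻¹) + (Pstar⁻¹ * Q * Pstar⁻¹) ⊗ₖ Pstar⁻¹) = 0 := by
    have h1 : (A * Pstar⁻¹) ⊗ₖ Pstar⁻¹ + (Pstar⁻¹ * Aᵀ) ⊗ₖ Pstar⁻¹
        = -((Pstar⁻¹ * Q * Pstar⁻¹) ⊗ₖ Pstar⁻¹) := by
      rw [← Matrix.add_kronecker, key, neg_kronecker']
    have h2 : Pstar⁻¹ ⊗ₖ (A * Pstar⁻¹) + Pstar⁻¹ ⊗ₖ (Pstar⁻¹ * Aᵀ)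
        = -(Pstar⁻¹ ⊗ₖ (Pstar⁻¹ * Q * Pstar⁻¹)) := by
      rw [← Matrix.kronecker_add, key, kronecker_neg']
    linear_combination (norm := abel) h1 + h2
  linear_combination (norm := abel) e1
end

section
/- Let A, Q, D, P* be n×n real matrices such that P* is symmetric positive definite, D is positive semidefinite, Q is symmetric, and Aᵀ P* + P* A + Q − P* D P* = 0 (the algebraic Riccati equation). Set A_cl := A − D P*. Then for every symmetric n×n real matrix P̃ such that P* + P̃ is positive semidefinite, tr(P*⁻¹ P̃ P*⁻¹ (A_clᵀ P̃ + P̃ A_cl − P̃ D P̃)) ≤ − tr(P*⁻¹ P̃ P*⁻¹ Q P*⁻¹ P̃). -/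
/-! Write `S = P*⁻¹`. Conjugating the Riccati equation by `S` gives `S A_clᵀ + A_cl S = -S Q S - D`,
and cyclicity of the trace turns the left-hand side into
`-tr(S P̃ S Q S P̃) - tr(P̃ S (P* + P̃) S P̃ D)`. The matrix `P̃ S (P* + P̃) S P̃` is a congruence of
`P* + P̃ ⪰ 0`, so its trace against `D ⪰ 0` is nonnegative. -/

open Matrix

open scoped ComplexOrder MatrixOrder in
theorem Matrix.PosSemidef.trace_mul_nonneg {𝕜 n : Type*} [RCLike 𝕜] [Fintype n]
    {M N : Matrix n n 𝕜} (hM : M.PosSemidef) (hN : N.PosSemidef) : 0 ≤ (M * N).trace := by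
  classical
  obtain ⟨B, rfl⟩ := CStarAlgebra.nonneg_iff_eq_star_mul_self.mp hN.nonneg
  rw [star_eq_conjTranspose, ← mul_assoc, trace_mul_comm, ← mul_assoc]
  exact (hM.mul_mul_conjTranspose_same B).trace_nonneg

section Riccati

variable {m R : Type*} [Fintype m] [CommRing R]

theorem closedLoop_lyapunov_eq_of_riccati {A Q D P : Matrix m m R} (hP : Pᵀ = P) (hD : Dᵀ = D)
    (hARE : Aᵀ * P + P * A + Q - P * D * P = 0) :
    (A - D * P)ᵀ * P + P * (A - D * P) = -Q - P * D * P := by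
  rw [transpose_sub, transpose_mul, hP, hD, ← sub_eq_zero, ← hARE]
  noncomm_ring

theorem riccati_dissipation_identity [DecidableEq m] {P S Acl Q D X : Matrix m m R}
    (hSP : S * P = 1) (hPS : P * S = 1) (hK : Aclᵀ * P + P * Acl = -Q - P * D * P) :
    (S * X * S * (Aclᵀ * X + X * Acl - X * D * X)).trace =
      -(S * X * S * Q * S * X).trace - (X * S * (P + X) * S * X * D).trace := by
  have hKS : S * Aclᵀ + Acl * S = -(S * Q * S) - D := by
    calc S * Aclᵀ + Acl * S = S * Aclᵀ * (P * S) + (S * P) * Acl * S := by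
          rw [hPS, hSP, mul_one, one_mul]
      _ = S * (Aclᵀ * P + P * Acl) * S := by noncomm_ring
      _ = -(S * Q * S) - (S * P) * D * (P * S) := by rw [hK]; noncomm_ring
      _ = -(S * Q * S) - D := by rw [hSP, hPS, one_mul, mul_one]
  have hcyc₁ := trace_mul_comm (S * X * S * Aclᵀ) X
  have hcyc₂ := trace_mul_comm S (X * S * X * Acl)
  have hcyc₃ := trace_mul_comm (S * X * S * X * D) X
  have hcyc₄ := trace_mul_comm (S * X * S * Q * S) X
  have hPX : X * S * (P + X) * S * X * D = X * S * X * D + X * S * X * S * X * D := by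
    calc X * S * (P + X) * S * X * D = X * (S * P) * S * X * D + X * S * X * S * X * D := by
          noncomm_ring
      _ = _ := by rw [hSP, mul_one]
  calc (S * X * S * (Aclᵀ * X + X * Acl - X * D * X)).trace
      = (X * S * X * (S * Aclᵀ + Acl * S)).trace - (X * S * X * S * X * D).trace := by
        simp only [mul_add, mul_sub, trace_add, trace_sub, mul_assoc] at hcyc₁ hcyc₂ hcyc₃ ⊢
        rw [hcyc₁, hcyc₂, hcyc₃]
    _ = -(S * X * S * Q * S * X).trace - (X * S * (P + X) * S * X * D).trace := by
        rw [hKS, hPX]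
        simp only [mul_sub, mul_neg, trace_add, trace_sub, trace_neg, mul_assoc] at hcyc₄ ⊢
        rw [hcyc₄]
        ring

end Riccati

theorem riccati_dissipation_inequality_general {n : ℕ}
    (A Q D Pstar : Matrix (Fin n) (Fin n) ℝ)
    (hPstar : Pstar.PosDef) (hD : D.PosSemidef)
    (hARE : Aᵀ * Pstar + Pstar * A + Q - Pstar * D * Pstar = 0)
    (Ptil : Matrix (Fin n) (Fin n) ℝ) (hPtil : Ptil.IsSymm)
    (hcone : (Pstar + Ptil).PosSemidef) :
    (Pstar⁻¹ * Ptil * Pstar⁻¹ *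
        ((A - D * Pstar)ᵀ * Ptil + Ptil * (A - D * Pstar) - Ptil * D * Ptil)).trace ≤
      -(Pstar⁻¹ * Ptil * Pstar⁻¹ * Q * Pstar⁻¹ * Ptil).trace := by
  have hdet : IsUnit Pstar.det := (isUnit_iff_isUnit_det _).mp hPstar.isUnit
  have hPsymm : Pstarᵀ = Pstar :=
    (conjTranspose_eq_transpose_of_trivial _).symm.trans hPstar.isHermitian.eq
  have hDsymm : Dᵀ = D := (conjTranspose_eq_transpose_of_trivial _).symm.trans hD.isHermitian.eq
  rw [riccati_dissipation_identity (nonsing_inv_mul _ hdet) (mul_nonsing_inv _ hdet)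
    (closedLoop_lyapunov_eq_of_riccati hPsymm hDsymm hARE)]
  have hcongr : (Ptil * Pstar⁻¹ * (Pstar + Ptil) * Pstar⁻¹ * Ptil).PosSemidef := by
    have hSH : (Pstar⁻¹)ᴴ = Pstar⁻¹ := hPstar.isHermitian.inv.eq
    have hXH : Ptilᴴ = Ptil := (conjTranspose_eq_transpose_of_trivial _).trans hPtil.eq
    simpa only [conjTranspose_mul, hSH, hXH, mul_assoc] using
      hcone.mul_mul_conjTranspose_same (Ptil * Pstar⁻¹)
  linarith [hcongr.trace_mul_nonneg hD]

/-- Dissipation inequality for the shifted differential Riccati equation: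
on the invariant set `{P̃ : P* + P̃ ⪰ 0}`,
`tr(P*⁻¹ P̃ P*⁻¹ (A_clᵀ P̃ + P̃ A_cl − P̃ D P̃)) ≤ − tr(P*⁻¹ P̃ P*⁻¹ Q P*⁻¹ P̃)`. -/
theorem riccati_dissipation_inequality {n : ℕ}
    (A Q D Pstar : Matrix (Fin n) (Fin n) ℝ)
    (hPstar : Pstar.PosDef) (hD : D.PosSemidef) (hQ : Q.IsSymm)
    (hARE : Aᵀ * Pstar + Pstar * A + Q - Pstar * D * Pstar = 0)
    (Ptil : Matrix (Fin n) (Fin n) ℝ) (hPtil : Ptil.IsSymm)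
    (hcone : (Pstar + Ptil).PosSemidef) :
    (Pstar⁻¹ * Ptil * Pstar⁻¹ *
        ((A - D * Pstar)ᵀ * Ptil + Ptil * (A - D * Pstar) - Ptil * D * Ptil)).trace ≤
      -(Pstar⁻¹ * Ptil * Pstar⁻¹ * Q * Pstar⁻¹ * Ptil).trace :=
  riccati_dissipation_inequality_general A Q D Pstar hPstar hD hARE Ptil hPtil hcone
end

section
/- Let A_cl be an n×n real matrix, K an m×n real matrix, and let Q, R, P₀, W₀ be real matrices (Q, P₀, W₀ of size n×n, R of size m×m) such that: A_clᵀ P₀ + P₀ A_cl + Q + Kᵀ R K = 0; A_cl W₀ + W₀ A_clᵀ + I_n = 0; W₀ is positive semidefinite; R is positive semidefinite; and Q − q·I_n is positive semidefinite for some real q > 0. Then the L2 operator norm of W₀ satisfies ‖W₀‖ ≤ tr(P₀)/q. -/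
/-!
Write `C = Q + Kᵀ R K`. Pairing the Lyapunov equation `Aᵀ P₀ + P₀ A + C = 0` with its dual
`A W₀ + W₀ Aᵀ + I = 0` and cycling the trace gives `tr P₀ = tr (C W₀)`. Traces of products of
positive semidefinite matrices are nonnegative, so `tr (C W₀) ≥ tr (Q W₀) ≥ q tr W₀`, and the
operator norm of a positive semidefinite matrix, its largest eigenvalue, is at most its trace.
-/

open Matrix
open scoped Matrix.Norms.L2Operator

namespace Matrix

open scoped ComplexOrder

variable {n : Type*} [Fintype n]

theorem trace_mul_eq_of_lyapunov {R : Type*} [CommRing R] {A P W C X : Matrix n n R}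
    (hP : Aᵀ * P + P * A + C = 0) (hW : A * W + W * Aᵀ + X = 0) :
    (P * X).trace = (C * W).trace := by
  have hX : X = -(A * W + W * Aᵀ) := eq_neg_of_add_eq_zero_right hW
  have hC : C = -(Aᵀ * P + P * A) := eq_neg_of_add_eq_zero_right hP
  have hcycle : (P * (W * Aᵀ)).trace = (Aᵀ * P * W).trace := by
    rw [← Matrix.mul_assoc, trace_mul_cycle]
  subst hX hC
  simp only [Matrix.mul_neg, Matrix.neg_mul, Matrix.mul_add, Matrix.add_mul, trace_neg, trace_add,
    hcycle, Matrix.mul_assoc]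
  ring

open scoped MatrixOrder in
theorem PosSemidef.trace_mul_nonneg_s11 {𝕜 : Type*} [RCLike 𝕜] {S W : Matrix n n 𝕜}
    (hS : S.PosSemidef) (hW : W.PosSemidef) : 0 ≤ (S * W).trace := by
  classical
  obtain ⟨B, rfl⟩ := CStarAlgebra.nonneg_iff_eq_star_mul_self.mp hW.nonneg
  rw [← Matrix.mul_assoc, trace_mul_comm, ← Matrix.mul_assoc]
  exact (hS.mul_mul_conjTranspose_same B).trace_nonneg

theorem PosSemidef.mul_trace_le_trace_mul [DecidableEq n] {Q W : Matrix n n ℝ} {q : ℝ}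
    (hQ : (Q - q • (1 : Matrix n n ℝ)).PosSemidef) (hW : W.PosSemidef) :
    q * W.trace ≤ (Q * W).trace := by
  have h := hQ.trace_mul_nonneg_s11 hW
  rwa [Matrix.sub_mul, trace_sub, Matrix.smul_mul, Matrix.one_mul, trace_smul, smul_eq_mul,
    sub_nonneg] at h

theorem PosSemidef.l2_opNorm_le_re_trace [DecidableEq n] {𝕜 : Type*} [RCLike 𝕜]
    {W : Matrix n n 𝕜} (hW : W.PosSemidef) : ‖W‖ ≤ RCLike.re W.trace := by
  have hev := hW.eigenvalues_nonneg
  conv_lhs => rw [hW.1.spectral_theorem]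
  rw [Unitary.conjStarAlgAut_apply, ← Unitary.coe_star, CStarRing.norm_mul_coe_unitary,
    CStarRing.norm_coe_unitary_mul, l2_opNorm_diagonal, hW.1.trace_eq_sum_eigenvalues]
  simp only [map_sum, RCLike.ofReal_re]
  refine (pi_norm_le_iff_of_nonneg (Finset.sum_nonneg fun i _ => hev i)).2 fun i => ?_
  rw [Function.comp_apply, RCLike.norm_ofReal, abs_of_nonneg (hev i)]
  exact Finset.single_le_sum (fun j _ => hev j) (Finset.mem_univ i)

end Matrix

/-- Bound on the closed-loop Gramian: `‖W₀‖ ≤ tr(P₀)/q` where `q ≤ σ_min(Q)`. -/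
theorem gramian_norm_bound {n m : ℕ}
    (Acl : Matrix (Fin n) (Fin n) ℝ) (K : Matrix (Fin m) (Fin n) ℝ)
    (Q P₀ W₀ : Matrix (Fin n) (Fin n) ℝ) (R : Matrix (Fin m) (Fin m) ℝ)
    (q : ℝ) (hq : 0 < q)
    (hP₀ : Aclᵀ * P₀ + P₀ * Acl + Q + Kᵀ * R * K = 0)
    (hW₀ : Acl * W₀ + W₀ * Aclᵀ + 1 = 0)
    (hW₀psd : W₀.PosSemidef) (hRpsd : R.PosSemidef)
    (hQq : (Q - q • (1 : Matrix (Fin n) (Fin n) ℝ)).PosSemidef) :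
    ‖W₀‖ ≤ P₀.trace / q := by
  have htrace : P₀.trace = (Q * W₀).trace + (Kᵀ * R * K * W₀).trace := by
    rw [← Matrix.mul_one P₀, trace_mul_eq_of_lyapunov (C := Q + Kᵀ * R * K)
      (by rwa [← add_assoc]) hW₀, Matrix.add_mul, trace_add]
  have hKRK : 0 ≤ (Kᵀ * R * K * W₀).trace :=
    PosSemidef.trace_mul_nonneg_s11 (by simpa using hRpsd.conjTranspose_mul_mul_same K) hW₀psd
  have hnorm : ‖W₀‖ ≤ W₀.trace := by simpa using hW₀psd.l2_opNorm_le_re_trace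
  rw [le_div_iff₀' hq]
  nlinarith [hQq.mul_trace_le_trace_mul hW₀psd]
end

section
/- Let A be an n×n real Hurwitz matrix (every eigenvalue of its complexification has strictly negative real part), and let W and W′ be symmetric n×n real matrices such that A W + W Aᵀ + I_n = 0 and −(A W′ + W′ Aᵀ + I_n) is positive semidefinite. Then W′ − W is positive semidefinite. -/
/-
With `D := W' - W` and `Q := -(A W' + W' Aᵀ + 1) ⪰ 0` we have `A D + D Aᵀ = -Q`. Along the flow
`t ↦ e^{tA} D e^{tA}ᵀ` each quadratic form `xᵀ (·) x` has derivative `-xᵀ e^{tA} Q e^{tA}ᵀ x ≤ 0`,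
so `xᵀ D x ≥ xᵀ e^{kA} D e^{kA}ᵀ x` for all `k : ℕ`. Every eigenvalue of `e^A` is `e^λ` for an
eigenvalue `λ` of `A`, hence has modulus `< 1`; by Gelfand's formula `e^{kA} = (e^A)^k → 0`, and
letting `k → ∞` gives `xᵀ D x ≥ 0`.
-/

open Matrix

/-- A real square matrix is Hurwitz if every eigenvalue of its complexification
has strictly negative real part. -/
def Matrix.IsHurwitz {n : ℕ} (A : Matrix (Fin n) (Fin n) ℝ) : Prop :=
  ∀ μ ∈ spectrum ℂ (A.map (Complex.ofReal)), μ.re < 0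

open NormedSpace Filter
open scoped Topology

attribute [local instance] Matrix.linftyOpNormedRing Matrix.linftyOpNormedAlgebra

theorem tendsto_pow_atTop_nhds_zero_of_spectralRadius_lt_one {A : Type*} [NormedRing A]
    [NormedAlgebra ℂ A] [CompleteSpace A] {a : A} (ha : spectralRadius ℂ a < 1) :
    Tendsto (a ^ ·) atTop (𝓝 0) := by
  obtain ⟨c, hρc, hc1⟩ := ENNReal.lt_iff_exists_nnreal_btwn.mp ha
  have hbound : ∀ᶠ k : ℕ in atTop, ‖a ^ k‖ ≤ (c : ℝ) ^ k := by
    have hgelfand := spectrum.pow_nnnorm_pow_one_div_tendsto_nhds_spectralRadius a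
    filter_upwards [hgelfand.eventually_lt_const hρc, eventually_gt_atTop 0] with k hk hk0
    rw [one_div, ENNReal.rpow_inv_lt_iff (by positivity), ENNReal.rpow_natCast] at hk
    exact_mod_cast hk.le
  rw [tendsto_zero_iff_norm_tendsto_zero]
  exact squeeze_zero' (Eventually.of_forall fun _ => norm_nonneg _) hbound
    (tendsto_pow_atTop_nhds_zero_of_lt_one c.2 (mod_cast hc1))

namespace Matrix

variable {ι : Type*} [Fintype ι] [DecidableEq ι]

theorem exp_mulVec_of_mulVec_eq_smul {M : Matrix ι ι ℂ} {v : ι → ℂ} {μ : ℂ}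
    (hv : M *ᵥ v = μ • v) : exp M *ᵥ v = exp μ • v := by
  have hpow (k : ℕ) : M ^ k *ᵥ v = μ ^ k • v := by
    induction k with
    | zero => simp
    | succ k ih => rw [pow_succ, ← mulVec_mulVec, hv, mulVec_smul, ih, smul_smul, pow_succ']
  have hM := (exp_series_hasSum_exp' (𝕂 := ℂ) M).map (mulVec.addMonoidHomLeft v)
    (continuous_id.matrix_mulVec continuous_const)
  have hμ := (exp_series_hasSum_exp' (𝕂 := ℂ) μ).smul_const v
  simp only [Function.comp_def, mulVec.addMonoidHomLeft, AddMonoidHom.coe_mk, ZeroHom.coe_mk,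
    smul_mulVec, hpow, smul_smul] at hM
  exact hM.unique hμ

theorem spectrum_exp_subset (M : Matrix ι ι ℂ) :
    spectrum ℂ (exp M) ⊆ exp '' spectrum ℂ M := by
  -- The eigenspace of `exp M` for `μ` is `M`-invariant, so it contains an eigenvector of `M`.
  intro μ hμ
  rw [← spectrum_toLin', ← Module.End.hasEigenvalue_iff_mem_spectrum] at hμ
  have hcomm : Commute (toLin' (exp M)) (toLin' M) :=
    ((Commute.refl M).exp_left).map toLinAlgEquiv'
  have hE := Module.End.mapsTo_genEigenspace_of_comm hcomm μ 1
  have : Nontrivial (Module.End.genEigenspace (toLin' (exp M)) μ 1) :=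
    Submodule.nontrivial_iff_ne_bot.mpr hμ
  obtain ⟨l, hl⟩ := Module.End.exists_eigenvalue ((toLin' M).restrict hE)
  obtain ⟨⟨w, hwμ⟩, hw⟩ := hl.exists_hasEigenvector
  have hw0 : w ≠ 0 := by simpa using hw.2
  have hwl : M *ᵥ w = l • w := congrArg Subtype.val hw.apply_eq_smul
  have hwμ : exp M *ᵥ w = μ • w := by simpa [Module.End.mem_genEigenspace_one] using hwμ
  refine ⟨l, ?_, smul_left_injective ℂ hw0 ?_⟩
  · rw [← spectrum_toLin', ← Module.End.hasEigenvalue_iff_mem_spectrum]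
    exact Module.End.hasEigenvalue_of_hasEigenvector (x := w) ⟨by simpa using hwl, hw0⟩
  · exact (exp_mulVec_of_mulVec_eq_smul hwl).symm.trans hwμ

theorem hasDerivAt_exp_smul_mul_mul_transpose (A D : Matrix ι ι ℝ) (t : ℝ) :
    HasDerivAt (fun s : ℝ => exp (s • A) * D * (exp (s • A))ᵀ)
      (exp (t • A) * (A * D + D * Aᵀ) * (exp (t • A))ᵀ) t := by
  have hT (s : ℝ) : (exp (s • A))ᵀ = exp (s • Aᵀ) := by rw [← exp_transpose, transpose_smul]
  simp only [hT]
  rw [show exp (t • A) * (A * D + D * Aᵀ) * exp (t • Aᵀ)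
      = exp (t • A) * A * D * exp (t • Aᵀ) + exp (t • A) * D * (Aᵀ * exp (t • Aᵀ)) by
    simp only [mul_add, add_mul, mul_assoc]]
  exact ((hasDerivAt_exp_smul_const A t).mul_const D).mul (hasDerivAt_exp_smul_const' Aᵀ t)

theorem antitone_dotProduct_exp_smul_mul_mul_transpose_mulVec {A D Q : Matrix ι ι ℝ}
    (hQ : Q.PosSemidef) (hDQ : A * D + D * Aᵀ = -Q) (x : ι → ℝ) :
    Antitone fun t : ℝ => x ⬝ᵥ ((exp (t • A) * D * (exp (t • A))ᵀ) *ᵥ x) := by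
  let L : Matrix ι ι ℝ →L[ℝ] ℝ := LinearMap.toContinuousLinearMap
    { toFun := fun M => x ⬝ᵥ (M *ᵥ x)
      map_add' := fun M N => by simp [add_mulVec]
      map_smul' := fun c M => by simp [smul_mulVec] }
  have hderiv (t : ℝ) :=
    L.hasFDerivAt.comp_hasDerivAt t (hasDerivAt_exp_smul_mul_mul_transpose A D t)
  refine antitone_of_hasDerivAt_nonpos hderiv fun t => ?_
  change x ⬝ᵥ ((exp (t • A) * (A * D + D * Aᵀ) * (exp (t • A))ᵀ) *ᵥ x) ≤ 0
  have hpsd := hQ.mul_mul_conjTranspose_same (exp (t • A))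
  rw [conjTranspose_eq_transpose_of_trivial] at hpsd
  simpa [hDQ, neg_mulVec] using hpsd.dotProduct_mulVec_nonneg x

theorem posSemidef_of_mul_add_mul_transpose_eq_neg {A D Q : Matrix ι ι ℝ}
    (hA : Tendsto (fun k : ℕ => exp A ^ k) atTop (𝓝 0)) (hD : D.IsSymm) (hQ : Q.PosSemidef)
    (hDQ : A * D + D * Aᵀ = -Q) : D.PosSemidef := by
  refine posSemidef_iff_dotProduct_mulVec.mpr ⟨isHermitian_iff_isSymm.mpr hD, fun x => ?_⟩
  rw [star_trivial]
  have hexp (k : ℕ) : exp ((k : ℝ) • A) = exp A ^ k := by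
    rw [Nat.cast_smul_eq_nsmul, exp_nsmul]
  have hlim : Tendsto (fun k : ℕ => x ⬝ᵥ ((exp A ^ k * D * (exp A ^ k)ᵀ) *ᵥ x)) atTop (𝓝 0) := by
    have hquad : Continuous fun M : Matrix ι ι ℝ => x ⬝ᵥ ((M * D * Mᵀ) *ᵥ x) := by fun_prop
    simpa only [Function.comp_def, transpose_zero, mul_zero, zero_mulVec, dotProduct_zero] using
      (hquad.tendsto 0).comp hA
  refine le_of_tendsto' hlim fun k => ?_
  simpa [hexp] using
    antitone_dotProduct_exp_smul_mul_mul_transpose_mulVec hQ hDQ x (Nat.cast_nonneg k)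

end Matrix

theorem Matrix.IsHurwitz.tendsto_exp_pow {n : ℕ} {A : Matrix (Fin n) (Fin n) ℝ}
    (hA : A.IsHurwitz) :
    Tendsto (fun k : ℕ => exp A ^ k) atTop (𝓝 0) := by
  set Ac := A.map Complex.ofReal
  have hρ : spectralRadius ℂ (exp Ac) < 1 := by
    rcases (spectrum ℂ (exp Ac)).eq_empty_or_nonempty with h | h
    · simp [spectralRadius, h]
    refine spectrum.spectralRadius_lt_of_forall_lt_of_nonempty h fun z hz => ?_
    obtain ⟨l, hl, rfl⟩ := spectrum_exp_subset Ac hz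
    rw [← NNReal.coe_lt_coe, coe_nnnorm, ← Complex.exp_eq_exp_ℂ, Complex.norm_exp]
    simpa using hA l hl
  have hmap (k : ℕ) : (exp Ac ^ k).map Complex.re = exp A ^ k := by
    have : exp Ac = Complex.ofRealHom.mapMatrix (exp A) :=
      (map_exp (Complex.ofRealHom.mapMatrix : Matrix (Fin n) (Fin n) ℝ →+* _)
        (continuous_id.matrix_map Complex.continuous_ofReal) A).symm
    rw [this, ← map_pow]
    ext i j
    simp
  simpa only [Function.comp_def, id_eq, hmap, Matrix.map_zero _ Complex.zero_re] using
    ((continuous_id.matrix_map Complex.continuous_re).tendsto 0).comp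
      (tendsto_pow_atTop_nhds_zero_of_spectralRadius_lt_one hρ)

/-- Comparison of Lyapunov equation solutions: for Hurwitz `A`, if
`A W + W Aᵀ + I = 0` and `A W′ + W′ Aᵀ + I ⪯ 0`, then `W ⪯ W′`. -/
theorem lyapunov_solution_comparison {n : ℕ}
    (A W W' : Matrix (Fin n) (Fin n) ℝ)
    (hA : A.IsHurwitz) (hW : W.IsSymm) (hW' : W'.IsSymm)
    (hWeq : A * W + W * Aᵀ + 1 = 0)
    (hW'ineq : (-(A * W' + W' * Aᵀ + 1)).PosSemidef) :
    (W' - W).PosSemidef := by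
  refine posSemidef_of_mul_add_mul_transpose_eq_neg hA.tendsto_exp_pow (hW'.sub hW) hW'ineq ?_
  rw [neg_neg, ← sub_zero (A * W' + W' * Aᵀ + 1), ← hWeq]
  noncomm_ring
end

section
/- Let A, Q be n×n real matrices and B₀, Δ_B n×m real matrices with B := B₀ + Δ_B; let R be an m×m real matrix. Assume: Q and R are symmetric positive definite with Q − q·I_n ⪰ 0 and R − r·I_m ⪰ 0 for reals q, r > 0; ‖Δ_B‖ ≤ ε for a real ε ≥ 0; P₀ is a symmetric positive definite n×n matrix satisfying the nominal algebraic Riccati equation Aᵀ P₀ + P₀ A + Q − P₀ B₀ R⁻¹ B₀ᵀ P₀ = 0; K₀ := −R⁻¹ B₀ᵀ P₀; and ε < √(q·r)/(2·tr(P₀)). Set η := 1 − 2ε·tr(P₀)/√(q·r). Then: (i) A + B K₀ is Hurwitz (every eigenvalue of its complexification has strictly negative real part); and (ii) for every symmetric positive semidefinite n×n matrix W satisfying (A + B K₀) W + W (A + B K₀)ᵀ + I_n = 0, the LQR cost satisfies tr((Q + K₀ᵀ R K₀) W) ≤ tr(P₀)/η. -/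
/-! Write `A_c = A + (B₀ + ΔB) K₀`, `S = Q + K₀ᵀ R K₀` and `G = ΔBᵀ P₀`. Substituting the
Riccati equation and `K₀ = -R⁻¹ B₀ᵀ P₀` gives the closed-loop Lyapunov identity
`A_cᵀ P₀ + P₀ A_c = (K₀ᵀ G + Gᵀ K₀) - S`.
Since `‖G‖ ≤ ‖ΔB‖ ‖P₀‖ ≤ ε tr P₀`, the matrix AM–GM inequality together with `q I ≤ Q` and
`r I ≤ R` bounds the perturbation term in the Loewner order:
`K₀ᵀ G + Gᵀ K₀ ≤ (ε tr P₀ / √(qr)) S ≤ (1 - η) S`.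
So the right-hand side is at most `-η S ≤ -η q I`, and `P₀` is a Lyapunov certificate for `A_c`.
Pairing the identity with the Gramian `W` gives `tr(S W) - tr((K₀ᵀ G + Gᵀ K₀) W) = tr P₀`,
whence `η tr(S W) ≤ tr P₀`. -/

open Matrix
open scoped Matrix.Norms.L2Operator

open scoped MatrixOrder

lemma EuclideanSpace.norm_toLp_sq {ι : Type*} [Fintype ι] (v : ι → ℝ) :
    ‖WithLp.toLp 2 v‖ ^ 2 = v ⬝ᵥ v := by
  rw [← real_inner_self_eq_norm_sq, EuclideanSpace.inner_eq_star_dotProduct]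
  simp

namespace Matrix

lemma posDef_of_smul_one_le {ι : Type*} [DecidableEq ι] {M : Matrix ι ι ℝ} {c : ℝ} (hc : 0 < c)
    (h : c • 1 ≤ M) : M.PosDef := by
  simpa using (PosDef.one.smul hc).add_posSemidef h

variable {ι κ : Type*} [Fintype ι] [Fintype κ]

lemma posDef_sub_of_le_smul [DecidableEq ι] {S C : Matrix ι ι ℝ} {q η : ℝ}
    (hq : 0 < q) (hη : 0 < η) (hS : q • 1 ≤ S) (hC : C ≤ (1 - η) • S) : (S - C).PosDef := by
  refine posDef_of_smul_one_le (mul_pos hη hq) ?_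
  calc (η * q) • (1 : Matrix ι ι ℝ) = η • q • 1 := mul_smul _ _ _
    _ ≤ η • S := smul_le_smul_of_nonneg_left hS hη.le
    _ = S - (1 - η) • S := by rw [sub_smul, one_smul, sub_sub_cancel]
    _ ≤ S - C := sub_le_sub_left hC S

lemma transpose_mul_self_nonneg (G : Matrix κ ι ℝ) : 0 ≤ Gᵀ * G := by
  simpa [nonneg_iff_posSemidef] using posSemidef_conjTranspose_mul_self G

lemma transpose_mul_mul_le [DecidableEq κ] {R : Matrix κ κ ℝ} {r : ℝ} (hR : r • 1 ≤ R)
    (K : Matrix κ ι ℝ) : r • (Kᵀ * K) ≤ Kᵀ * R * K := by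
  have := (le_iff.1 hR).conjTranspose_mul_mul_same K
  rw [le_iff]
  simpa [conjTranspose_eq_transpose_of_trivial, Matrix.mul_sub, Matrix.sub_mul, Matrix.mul_assoc]
    using this

lemma transpose_mul_add_transpose_mul_le (K G : Matrix κ ι ℝ) {t : ℝ} (ht : 0 < t) :
    Kᵀ * G + Gᵀ * K ≤ t • (Kᵀ * K) + t⁻¹ • (Gᵀ * G) := by
  have h : 0 ≤ t⁻¹ • ((t • K - G)ᵀ * (t • K - G)) :=
    smul_nonneg (inv_nonneg.2 ht.le) (transpose_mul_self_nonneg _)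
  have hexp : t⁻¹ • ((t • K - G)ᵀ * (t • K - G)) =
      t • (Kᵀ * K) + t⁻¹ • (Gᵀ * G) - (Kᵀ * G + Gᵀ * K) := by
    simp only [transpose_sub, transpose_smul, Matrix.sub_mul, Matrix.mul_sub, Matrix.smul_mul,
      Matrix.mul_smul, smul_sub, smul_smul, inv_mul_cancel_left₀ ht.ne', inv_mul_cancel₀ ht.ne',
      one_smul]
    abel
  rwa [hexp, sub_nonneg] at h

lemma transpose_mul_self_le_opNorm_sq_smul_one [DecidableEq ι] (G : Matrix κ ι ℝ) :
    Gᵀ * G ≤ ‖G‖ ^ 2 • 1 := by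
  rw [le_iff]
  refine PosSemidef.of_dotProduct_mulVec_nonneg ?_ fun x => ?_
  · have := (posSemidef_conjTranspose_mul_self G).isHermitian
    rw [conjTranspose_eq_transpose_of_trivial] at this
    exact (isHermitian_one.smul (IsSelfAdjoint.all _)).sub this
  · have h : ‖WithLp.toLp 2 (G *ᵥ x)‖ ^ 2 ≤ (‖G‖ * ‖WithLp.toLp 2 x‖) ^ 2 := by
      gcongr
      exact G.l2_opNorm_mulVec (WithLp.toLp 2 x)
    rw [mul_pow, EuclideanSpace.norm_toLp_sq, EuclideanSpace.norm_toLp_sq] at h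
    rw [star_trivial, sub_mulVec, dotProduct_sub, smul_mulVec, one_mulVec, dotProduct_smul,
      smul_eq_mul, ← mulVec_mulVec, dotProduct_mulVec, vecMul_transpose]
    linarith

lemma PosSemidef.mem_spectrum_le_trace [DecidableEq ι] {M : Matrix ι ι ℝ} (hM : M.PosSemidef)
    {x : ℝ} (hx : x ∈ spectrum ℝ M) : 0 ≤ x ∧ x ≤ M.trace := by
  rw [hM.isHermitian.spectrum_real_eq_range_eigenvalues] at hx
  obtain ⟨i, rfl⟩ := hx
  refine ⟨hM.eigenvalues_nonneg i, ?_⟩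
  rw [hM.isHermitian.trace_eq_sum_eigenvalues]
  exact Finset.single_le_sum (fun j _ => hM.eigenvalues_nonneg j) (Finset.mem_univ i)

lemma PosSemidef.sq_le_trace_sq_smul_one [DecidableEq ι] {M : Matrix ι ι ℝ}
    (hM : M.PosSemidef) : M ^ 2 ≤ M.trace ^ 2 • 1 := by
  have hsa : IsSelfAdjoint M := hM.isHermitian
  rw [← Algebra.algebraMap_eq_smul_one, le_algebraMap_iff_spectrum_le (hsa.pow 2),
    ← cfc_pow_id (R := ℝ) M 2, cfc_map_spectrum (fun x : ℝ => x ^ 2) M]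
  rintro _ ⟨x, hx, rfl⟩
  obtain ⟨hx0, hxT⟩ := hM.mem_spectrum_le_trace hx
  exact pow_le_pow_left₀ hx0 hxT 2

lemma PosSemidef.transpose_mul_self_le [DecidableEq ι] [DecidableEq κ] {P : Matrix ι ι ℝ}
    (hP : P.PosSemidef) {G : Matrix ι κ ℝ} {ε : ℝ} (hG : ‖G‖ ≤ ε) :
    (Gᵀ * P)ᵀ * (Gᵀ * P) ≤ (ε * P.trace) ^ 2 • 1 := by
  have hPs : Pᵀ = P := (isHermitian_iff_isSymm.1 hP.isHermitian).eq
  have hGG : G * Gᵀ ≤ ‖G‖ ^ 2 • 1 := by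
    simpa [l2_opNorm_conjTranspose, ← conjTranspose_eq_transpose_of_trivial] using
      transpose_mul_self_le_opNorm_sq_smul_one Gᵀ
  have hnorm : ‖G‖ ^ 2 ≤ ε ^ 2 := pow_le_pow_left₀ (norm_nonneg G) hG 2
  calc (Gᵀ * P)ᵀ * (Gᵀ * P) = star P * (G * Gᵀ) * P := by
        rw [star_eq_conjTranspose, conjTranspose_eq_transpose_of_trivial, transpose_mul,
          transpose_transpose, hPs, Matrix.mul_assoc, Matrix.mul_assoc, Matrix.mul_assoc]
    _ ≤ star P * (‖G‖ ^ 2 • 1) * P := star_left_conjugate_le_conjugate hGG P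
    _ = ‖G‖ ^ 2 • P ^ 2 := by
        rw [star_eq_conjTranspose, conjTranspose_eq_transpose_of_trivial, hPs, Matrix.mul_smul,
          Matrix.mul_one, Matrix.smul_mul, sq P]
    _ ≤ ε ^ 2 • (P.trace ^ 2 • 1) :=
        smul_le_smul hnorm hP.sq_le_trace_sq_smul_one (sq_nonneg _)
          (smul_nonneg (sq_nonneg _) zero_le_one)
    _ = (ε * P.trace) ^ 2 • 1 := by rw [smul_smul, mul_pow]

lemma transpose_mul_add_transpose_mul_le_smul [DecidableEq ι] [DecidableEq κ]
    {Q : Matrix ι ι ℝ} {R : Matrix κ κ ℝ} {K G : Matrix κ ι ℝ} {q r e : ℝ} (hq : 0 < q)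
    (hr : 0 < r) (he : 0 ≤ e) (hQ : q • 1 ≤ Q) (hR : r • 1 ≤ R) (hG : Gᵀ * G ≤ e ^ 2 • 1) :
    Kᵀ * G + Gᵀ * K ≤ (e / √(q * r)) • (Q + Kᵀ * R * K) := by
  rcases he.eq_or_lt with rfl | he
  · have hG0 : G = 0 := by
      rw [← conjTranspose_mul_self_eq_zero, conjTranspose_eq_transpose_of_trivial]
      exact le_antisymm (by simpa using hG) (transpose_mul_self_nonneg G)
    simp [hG0]
  set s := e / √(q * r)
  have hs : 0 < s := by positivity
  have hsq : s ^ 2 * (q * r) = e ^ 2 := by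
    rw [div_pow, Real.sq_sqrt (by positivity), div_mul_cancel₀ _ (by positivity)]
  have ht : 0 < s * r := by positivity
  -- AM–GM with weight `s r`, chosen so that both resulting coefficients equal `s`
  calc Kᵀ * G + Gᵀ * K ≤ (s * r) • (Kᵀ * K) + (s * r)⁻¹ • (Gᵀ * G) :=
        transpose_mul_add_transpose_mul_le K G ht
    _ ≤ s • (Kᵀ * R * K) + s • Q := by
        gcongr
        · rw [mul_smul]
          exact smul_le_smul_of_nonneg_left (transpose_mul_mul_le hR K) hs.le
        · calc (s * r)⁻¹ • (Gᵀ * G) ≤ (s * r)⁻¹ • (e ^ 2 • 1 : Matrix ι ι ℝ) :=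
                smul_le_smul_of_nonneg_left hG (inv_nonneg.2 ht.le)
            _ = s • (q • 1) := by
                rw [smul_smul, smul_smul, ← hsq]
                congr 1
                field_simp
            _ ≤ s • Q := smul_le_smul_of_nonneg_left hQ hs.le
    _ = s • (Q + Kᵀ * R * K) := by rw [smul_add, add_comm]

lemma lyapunov_closedLoop_of_riccati [DecidableEq κ] {A Q P : Matrix ι ι ℝ}
    {B₀ ΔB : Matrix ι κ ℝ} {R : Matrix κ κ ℝ} {K : Matrix κ ι ℝ} (hP : P.IsSymm) (hR : R.IsSymm)
    (hRdet : IsUnit R.det) (hARE : Aᵀ * P + P * A + Q - P * B₀ * R⁻¹ * B₀ᵀ * P = 0)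
    (hK : K = -(R⁻¹ * B₀ᵀ * P)) :
    (A + (B₀ + ΔB) * K)ᵀ * P + P * (A + (B₀ + ΔB) * K) =
      (Kᵀ * (ΔBᵀ * P) + (ΔBᵀ * P)ᵀ * K) - (Q + Kᵀ * R * K) := by
  have hKt : Kᵀ = -(P * B₀ * R⁻¹) := by
    rw [hK, transpose_neg, transpose_mul, transpose_mul, transpose_nonsing_inv, hR.eq, hP.eq,
      transpose_transpose, Matrix.mul_assoc]
  have hKRK : Kᵀ * R * K = P * B₀ * R⁻¹ * B₀ᵀ * P := by
    rw [hKt, hK]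
    simp only [Matrix.neg_mul, Matrix.mul_neg, neg_neg, Matrix.mul_assoc,
      nonsing_inv_mul_cancel_left _ _ hRdet]
  have hPBK : P * (B₀ * K) = -(P * B₀ * R⁻¹ * B₀ᵀ * P) := by
    rw [hK]; simp only [Matrix.mul_neg, Matrix.mul_assoc]
  have hKBP : Kᵀ * (B₀ᵀ * P) = -(P * B₀ * R⁻¹ * B₀ᵀ * P) := by
    rw [hKt]; simp only [Matrix.neg_mul, Matrix.mul_assoc]
  rw [← sub_eq_zero, ← hARE, hKRK]
  simp only [transpose_add, transpose_mul, Matrix.add_mul, Matrix.mul_add, Matrix.mul_assoc,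
    hPBK, hKBP, hP.eq, transpose_transpose]
  abel

lemma trace_mul_nonneg_of_nonneg [DecidableEq ι] {X W : Matrix ι ι ℝ} (hX : 0 ≤ X)
    (hW : W.PosSemidef) : 0 ≤ (X * W).trace := by
  have hS : IsSelfAdjoint (CFC.sqrt X) := (CFC.sqrt_nonneg X).isSelfAdjoint
  have h := (hW.mul_mul_conjTranspose_same (CFC.sqrt X)).trace_nonneg
  rwa [← star_eq_conjTranspose, hS.star_eq, trace_mul_comm, ← Matrix.mul_assoc,
    CFC.sqrt_mul_sqrt_self X hX] at h

lemma trace_mul_le_trace_mul_of_le [DecidableEq ι] {X Y W : Matrix ι ι ℝ} (hXY : X ≤ Y)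
    (hW : W.PosSemidef) : (X * W).trace ≤ (Y * W).trace := by
  have := trace_mul_nonneg_of_nonneg (sub_nonneg.2 hXY) hW
  rwa [Matrix.sub_mul, trace_sub, sub_nonneg] at this

lemma trace_lyapunov_mul (A P W : Matrix ι ι ℝ) :
    ((Aᵀ * P + P * A) * W).trace = (P * (A * W + W * Aᵀ)).trace := by
  simp only [Matrix.add_mul, Matrix.mul_add, trace_add, Matrix.mul_assoc]
  rw [add_comm, trace_mul_comm Aᵀ, Matrix.mul_assoc]

lemma trace_mul_le_div_of_lyapunov [DecidableEq ι] {A P S C W : Matrix ι ι ℝ} {η : ℝ}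
    (hη : 0 < η) (hAP : Aᵀ * P + P * A = C - S) (hC : C ≤ (1 - η) • S) (hW : W.PosSemidef)
    (hAW : A * W + W * Aᵀ + 1 = 0) : (S * W).trace ≤ P.trace / η := by
  have htr := trace_lyapunov_mul A P W
  rw [hAP, eq_neg_of_add_eq_zero_left hAW, Matrix.mul_neg, Matrix.mul_one, trace_neg,
    Matrix.sub_mul, trace_sub] at htr
  have hCW := trace_mul_le_trace_mul_of_le hC hW
  rw [smul_mul_assoc, trace_smul, smul_eq_mul] at hCW
  rw [le_div_iff₀ hη]
  linarith

lemma re_star_dotProduct_map_ofReal_mulVec (M : Matrix ι ι ℝ) (v : ι → ℂ) :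
    (star v ⬝ᵥ M.map Complex.ofReal *ᵥ v).re =
      (fun i => (v i).re) ⬝ᵥ M *ᵥ (fun i => (v i).re) +
        (fun i => (v i).im) ⬝ᵥ M *ᵥ (fun i => (v i).im) := by
  simp only [dotProduct, mulVec, Pi.star_apply, map_apply, Complex.re_sum, Finset.mul_sum,
    ← Finset.sum_add_distrib, Complex.mul_re, Complex.mul_im, RCLike.star_def, Complex.conj_re,
    Complex.conj_im, Complex.ofReal_re, Complex.ofReal_im]
  refine Finset.sum_congr rfl fun i _ => Finset.sum_congr rfl fun j _ => ?_
  ring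

lemma PosDef.re_star_dotProduct_map_ofReal_mulVec_pos {M : Matrix ι ι ℝ} (hM : M.PosDef)
    {v : ι → ℂ} (hv : v ≠ 0) : 0 < (star v ⬝ᵥ M.map Complex.ofReal *ᵥ v).re := by
  rw [re_star_dotProduct_map_ofReal_mulVec]
  have hre := hM.posSemidef.dotProduct_mulVec_nonneg (fun i => (v i).re)
  have him := hM.posSemidef.dotProduct_mulVec_nonneg (fun i => (v i).im)
  simp only [star_trivial] at hre him
  by_cases h : (fun i => (v i).re) = 0
  · have him_ne : (fun i => (v i).im) ≠ 0 := fun h' =>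
      hv (funext fun i => Complex.ext (congrFun h i) (congrFun h' i))
    have := hM.dotProduct_mulVec_pos him_ne
    simp only [star_trivial] at this
    linarith
  · have := hM.dotProduct_mulVec_pos h
    simp only [star_trivial] at this
    linarith

theorem IsHurwitz.of_lyapunov {n : ℕ} {A P N : Matrix (Fin n) (Fin n) ℝ} (hP : P.PosDef)
    (hN : N.PosDef) (h : Aᵀ * P + P * A = -N) : A.IsHurwitz := by
  intro μ hμ
  rw [← spectrum_toLin'] at hμ
  obtain ⟨v, hv⟩ := (Module.End.HasEigenvalue.of_mem_spectrum hμ).exists_hasEigenvector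
  have hAv : A.map Complex.ofReal *ᵥ v = μ • v := by
    rw [← toLin'_apply]; exact hv.apply_eq_smul
  have hAv' : star v ᵥ* (A.map Complex.ofReal)ᵀ = star μ • star v := by
    rw [vecMul_transpose, ← star_smul, ← hAv]
    ext i
    simp [mulVec, dotProduct, map_apply]
  have hmap := congrArg (Complex.ofRealHom.mapMatrix (m := Fin n)) h
  simp only [_root_.map_add, _root_.map_mul, _root_.map_neg, RingHom.mapMatrix_apply,
    transpose_map, show ⇑Complex.ofRealHom = Complex.ofReal from rfl] at hmap
  -- the quadratic form of `Aᵀ P + P A` at the eigenvector is `2 Re μ · v⋆ P v`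
  have key := congrArg (fun M => star v ⬝ᵥ M *ᵥ v) hmap
  simp only [Matrix.add_mulVec, dotProduct_add, Matrix.neg_mulVec, dotProduct_neg,
    ← mulVec_mulVec, hAv, mulVec_smul, dotProduct_smul, dotProduct_mulVec, hAv'] at key
  rw [smul_vecMul, smul_dotProduct, ← dotProduct_mulVec, ← dotProduct_mulVec, smul_eq_mul,
    smul_eq_mul, ← add_mul, RCLike.star_def, add_comm, Complex.add_conj] at key
  have hre := congrArg Complex.re key
  rw [Complex.re_ofReal_mul, Complex.neg_re] at hre
  have hPv := hP.re_star_dotProduct_map_ofReal_mulVec_pos hv.2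
  have hNv := hN.re_star_dotProduct_map_ofReal_mulVec_pos hv.2
  nlinarith

end Matrix

theorem certainty_equivalence_lqr_robust_uncertainty_general {n m : ℕ}
    (A Q : Matrix (Fin n) (Fin n) ℝ)
    (B₀ ΔB : Matrix (Fin n) (Fin m) ℝ)
    (R : Matrix (Fin m) (Fin m) ℝ)
    (q r : ℝ) (hq : 0 < q) (hr : 0 < r)
    (hQq : (Q - q • (1 : Matrix (Fin n) (Fin n) ℝ)).PosSemidef)
    (hRr : (R - r • (1 : Matrix (Fin m) (Fin m) ℝ)).PosSemidef)
    (ε : ℝ) (hΔB : ‖ΔB‖ ≤ ε)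
    (P₀ : Matrix (Fin n) (Fin n) ℝ) (hP₀ : P₀.PosDef)
    (hARE : Aᵀ * P₀ + P₀ * A + Q - P₀ * B₀ * R⁻¹ * B₀ᵀ * P₀ = 0)
    (K₀ : Matrix (Fin m) (Fin n) ℝ) (hK₀ : K₀ = -(R⁻¹ * B₀ᵀ * P₀))
    (hεsmall : ε < Real.sqrt (q * r) / (2 * P₀.trace))
    (η : ℝ) (hη : η = 1 - 2 * ε * P₀.trace / Real.sqrt (q * r)) :
    (A + (B₀ + ΔB) * K₀).IsHurwitz ∧
      ∀ W : Matrix (Fin n) (Fin n) ℝ, W.PosSemidef →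
        (A + (B₀ + ΔB) * K₀) * W + W * (A + (B₀ + ΔB) * K₀)ᵀ + 1 = 0 →
        ((Q + K₀ᵀ * R * K₀) * W).trace ≤ P₀.trace / η := by
  have hR := posDef_of_smul_one_le hr hRr
  have hT : 0 ≤ P₀.trace := hP₀.posSemidef.trace_nonneg
  have hε : 0 ≤ ε := (norm_nonneg _).trans hΔB
  set s := ε * P₀.trace / √(q * r)
  have hs : 0 ≤ s := by positivity
  have hη' : η = 1 - 2 * s := by rw [hη]; ring
  have hη0 : 0 < η := by
    rcases hT.eq_or_lt with hT0 | hT0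
    · simp [hη', s, ← hT0]
    · rw [lt_div_iff₀ (by positivity)] at hεsmall
      rw [hη', sub_pos, ← mul_div_assoc, div_lt_one (by positivity)]
      linarith
  set S := Q + K₀ᵀ * R * K₀
  set C := K₀ᵀ * (ΔBᵀ * P₀) + (ΔBᵀ * P₀)ᵀ * K₀
  have hqS : q • 1 ≤ S := le_add_of_le_of_nonneg hQq
    ((smul_nonneg hr.le (transpose_mul_self_nonneg K₀)).trans (transpose_mul_mul_le hRr K₀))
  have hCS : C ≤ (1 - η) • S :=
    calc C ≤ s • S := transpose_mul_add_transpose_mul_le_smul hq hr (by positivity) hQq hRr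
          (hP₀.posSemidef.transpose_mul_self_le hΔB)
      _ ≤ (1 - η) • S := smul_le_smul_of_nonneg_right (by linarith)
          ((smul_nonneg hq.le zero_le_one).trans hqS)
  have hlyap : (A + (B₀ + ΔB) * K₀)ᵀ * P₀ + P₀ * (A + (B₀ + ΔB) * K₀) = C - S :=
    lyapunov_closedLoop_of_riccati (isHermitian_iff_isSymm.1 hP₀.isHermitian)
      (isHermitian_iff_isSymm.1 hR.isHermitian) (isUnit_iff_ne_zero.2 hR.det_pos.ne') hARE hK₀
  exact ⟨IsHurwitz.of_lyapunov hP₀ (posDef_sub_of_le_smul hq hη0 hqS hCS)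
    (by rw [hlyap, neg_sub]), fun W hW hAW => trace_mul_le_div_of_lyapunov hη0 hlyap hCS hW hAW⟩

/-- Proposition 1: robustness of the certainty-equivalence LQR controller to
uncertainty `Δ_B` in the input matrix: the gain `K₀` stabilizes the true system
and the LQR cost satisfies `tr((Q + K₀ᵀ R K₀) W) ≤ tr(P₀)/η`. -/
theorem certainty_equivalence_lqr_robust_uncertainty {n m : ℕ}
    (A Q : Matrix (Fin n) (Fin n) ℝ)
    (B₀ ΔB : Matrix (Fin n) (Fin m) ℝ)
    (R : Matrix (Fin m) (Fin m) ℝ)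
    (q r : ℝ) (hq : 0 < q) (hr : 0 < r)
    (hQ : Q.PosDef) (hR : R.PosDef)
    (hQq : (Q - q • (1 : Matrix (Fin n) (Fin n) ℝ)).PosSemidef)
    (hRr : (R - r • (1 : Matrix (Fin m) (Fin m) ℝ)).PosSemidef)
    (ε : ℝ) (hε : 0 ≤ ε) (hΔB : ‖ΔB‖ ≤ ε)
    (P₀ : Matrix (Fin n) (Fin n) ℝ) (hP₀ : P₀.PosDef)
    (hARE : Aᵀ * P₀ + P₀ * A + Q - P₀ * B₀ * R⁻¹ * B₀ᵀ * P₀ = 0)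
    (K₀ : Matrix (Fin m) (Fin n) ℝ) (hK₀ : K₀ = -(R⁻¹ * B₀ᵀ * P₀))
    (hεsmall : ε < Real.sqrt (q * r) / (2 * P₀.trace))
    (η : ℝ) (hη : η = 1 - 2 * ε * P₀.trace / Real.sqrt (q * r)) :
    (A + (B₀ + ΔB) * K₀).IsHurwitz ∧
      ∀ W : Matrix (Fin n) (Fin n) ℝ, W.PosSemidef →
        (A + (B₀ + ΔB) * K₀) * W + W * (A + (B₀ + ΔB) * K₀)ᵀ + 1 = 0 →
        ((Q + K₀ᵀ * R * K₀) * W).trace ≤ P₀.trace / η :=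
  certainty_equivalence_lqr_robust_uncertainty_general A Q B₀ ΔB R q r hq hr hQq hRr ε hΔB P₀ hP₀
    hARE K₀ hK₀ hεsmall η hη
end
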